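/- arXiv:1405.0115 — 3 statements merged into one kernel-verified Lean document; each statement's English description precedes it below -/
import Mathlib

section
/- Every commutative semiring without zero whose multiplicative monoid is cancellative is torsion-free as a multiplicative monoid: if aⁿ = 1 for some n ≥ 1, then a = 1. -/
/-- Powers in a multiplicative monoid given by explicit operations. -/
def monPow {R : Type*} (mul : R → R → R) (one : R) (a : R) : ℕ → R
  | 0 => one
  | n + 1 => mul a (monPow mul one a n)

/-- 1 + a + ... + a^k. -/
def sumPow {R : Type*} (add mul : R → R → R) (one : R) (a : R) : ℕ → R
  | 0 => one
  | k + 1 => add (monPow mul one a (k+1)) (sumPow add mul one a k)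

/-- a + a^2 + ... + a^(k+1). -/
def shiftSum {R : Type*} (add mul : R → R → R) (one : R) (a : R) : ℕ → R
  | 0 => a
  | k + 1 => add (monPow mul one a (k+2)) (shiftSum add mul one a k)

/-- A commutative semiring without zero whose multiplicative monoid is
cancellative is torsion-free: aⁿ = 1 with n ≥ 1 implies a = 1. -/
theorem domain_torsion_free {R : Type*} (add mul : R → R → R) (one : R)
    (add_comm : ∀ a b, add a b = add b a)
    (add_assoc : ∀ a b c, add (add a b) c = add a (add b c))
    (mul_comm : ∀ a b, mul a b = mul b a)
    (mul_assoc : ∀ a b c, mul (mul a b) c = mul a (mul b c))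
    (mul_one : ∀ a, mul a one = a)
    (distrib : ∀ a b c, mul a (add b c) = add (mul a b) (mul a c))
    (cancel : ∀ a b c, mul a b = mul a c → b = c)
    (a : R) (n : ℕ) (hn : 1 ≤ n) (h : monPow mul one a n = one) : a = one := by
  -- sumPow k = 1 + a + ... + a^k ; shiftSum k = a + a^2 + ... + a^(k+1)
  have A : ∀ k, mul a (sumPow add mul one a k) = shiftSum add mul one a k := by
    intro k
    induction k with
    | zero => exact mul_one a
    | succ k ih =>
      show mul a (add (monPow mul one a (k+1)) (sumPow add mul one a k)) = _
      rw [distrib, ih]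
      rfl
  have B : ∀ k, sumPow add mul one a (k+1) = add one (shiftSum add mul one a k) := by
    intro k
    induction k with
    | zero =>
      show add (mul a one) one = add one a
      rw [mul_one, add_comm]
    | succ k ih =>
      show add (monPow mul one a (k+2)) (sumPow add mul one a (k+1))
          = add one (add (monPow mul one a (k+2)) (shiftSum add mul one a k))
      rw [ih]
      calc add (monPow mul one a (k+2)) (add one (shiftSum add mul one a k))
          = add (add one (shiftSum add mul one a k)) (monPow mul one a (k+2)) :=
            add_comm _ _
        _ = add one (add (shiftSum add mul one a k) (monPow mul one a (k+2))) :=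
            add_assoc _ _ _
        _ = add one (add (monPow mul one a (k+2)) (shiftSum add mul one a k)) := by
            rw [add_comm (shiftSum add mul one a k)]
  match n, hn with
  | 1, _ =>
    have : mul a one = one := h
    rw [← mul_one a, this]
  | (m+2), _ =>
    have hP : shiftSum add mul one a (m+1) = sumPow add mul one a (m+1) := by
      show add (monPow mul one a (m+2)) (shiftSum add mul one a m) = _
      rw [h, ← B]
    have key : mul (sumPow add mul one a (m+1)) a
        = mul (sumPow add mul one a (m+1)) one := by
      rw [mul_one, mul_comm, A, hP]
    exact cancel _ _ _ key
end

section
/- Let K be a kernel of an idempotent semifield S. If aⁿ ∈ K for some n ∈ ℕ, n ≥ 1, then a ∈ K. -/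
/-- An idempotent semifield structure on a multiplicative abelian group `S`:
a commutative, associative, idempotent addition over which multiplication
distributes. The induced order is `a ≤ b ↔ a + b = b`. -/
structure IdemSemifieldStr (S : Type*) [CommGroup S] where
  add : S → S → S
  add_comm : ∀ a b, add a b = add b a
  add_assoc : ∀ a b c, add (add a b) c = add a (add b c)
  add_idem : ∀ a, add a a = a
  mul_dist : ∀ g a b, g * add a b = add (g * a) (g * b)

namespace IdemSemifieldStr

variable {S : Type*} [CommGroup S] (A : IdemSemifieldStr S)

/-- The lattice order: `a ≤ b` iff `a + b = b`. -/
def le (a b : S) : Prop := A.add a b = b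

/-- The norm `|a| = a + a⁻¹`. -/
def abs (a : S) : S := A.add a a⁻¹

/-- A kernel: a convex multiplicative subgroup. -/
def IsKernel (K : Set S) : Prop :=
  (1 : S) ∈ K ∧ (∀ a ∈ K, ∀ b ∈ K, a * b ∈ K) ∧ (∀ a ∈ K, a⁻¹ ∈ K) ∧
  (∀ a ∈ K, ∀ b ∈ K, ∀ α β : S, A.add α β = 1 → A.add (α * a) (β * b) ∈ K)

/-- The kernel generated by a set: the intersection of all kernels containing it. -/
def kgen (T : Set S) : Set S := ⋂₀ {K : Set S | A.IsKernel K ∧ T ⊆ K}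

end IdemSemifieldStr

/-!
Write `s = 1 + a + ⋯ + a ^ (n - 1)`. Then `a * s ≤ s + a ^ n ≤ s * (1 + a ^ n)`, and cancelling `s`
gives `a ≤ 1 + a ^ n`; applied to `a⁻¹` and inverted this gives `(1 + a⁻ⁿ)⁻¹ ≤ a`. Both bounds are
convex combinations of `1`, `aⁿ`, `a⁻ⁿ ∈ K`, so convexity of `K` puts `a` in `K`.
-/

namespace IdemSemifieldStr

variable {S : Type*} [CommGroup S] (A : IdemSemifieldStr S)

theorem le_trans {a b c : S} (hab : A.le a b) (hbc : A.le b c) : A.le a c := by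
  unfold le at *
  rw [← hbc, ← A.add_assoc, hab]

theorem le_add_left (a b : S) : A.le a (A.add a b) := by
  unfold le
  rw [← A.add_assoc, A.add_idem]

theorem le_add_right (a b : S) : A.le b (A.add a b) :=
  A.add_comm b a ▸ A.le_add_left b a

theorem add_le {a b c : S} (hac : A.le a c) (hbc : A.le b c) : A.le (A.add a b) c := by
  unfold le at *
  rw [A.add_assoc, hbc, hac]

theorem mul_le_mul_left {a b : S} (h : A.le a b) (g : S) : A.le (g * a) (g * b) := by
  unfold le at *
  rw [← A.mul_dist, h]

theorem le_of_mul_le_mul_left {a b g : S} (h : A.le (g * a) (g * b)) : A.le a b := by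
  simpa using A.mul_le_mul_left h g⁻¹

theorem inv_le_inv {a b : S} (h : A.le a b) : A.le b⁻¹ a⁻¹ := by
  simpa [mul_comm, mul_left_comm] using A.mul_le_mul_left h (a⁻¹ * b⁻¹)

def geomSum (a : S) : ℕ → S
  | 0 => 1
  | n + 1 => A.add (geomSum a n) (a ^ (n + 1))

theorem one_le_geomSum (a : S) (n : ℕ) : A.le 1 (A.geomSum a n) := by
  induction n with
  | zero => exact A.add_idem 1
  | succ n ih => exact A.le_trans ih (A.le_add_left _ _)

theorem mul_geomSum_le (a : S) (n : ℕ) : A.le (a * A.geomSum a n) (A.geomSum a (n + 1)) := by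
  induction n with
  | zero => simpa [geomSum] using A.le_add_right 1 a
  | succ n ih =>
    rw [geomSum, A.mul_dist, ← pow_succ']
    exact A.add_le (A.le_trans ih (A.le_add_left _ _)) (A.le_add_right _ _)

theorem le_one_add_pow (a : S) {n : ℕ} (hn : 1 ≤ n) : A.le a (A.add 1 (a ^ n)) := by
  obtain ⟨m, rfl⟩ : ∃ m, n = m + 1 := ⟨n - 1, by omega⟩
  set s := A.geomSum a m
  have hpow : A.le (a ^ (m + 1)) (a ^ (m + 1) * s) := by
    simpa using A.mul_le_mul_left (A.one_le_geomSum a m) (a ^ (m + 1))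
  have hsum : A.le (A.add s (a ^ (m + 1))) (s * A.add 1 (a ^ (m + 1))) := by
    rw [A.mul_dist, mul_one, mul_comm s]
    exact A.add_le (A.le_add_left _ _) (A.le_trans hpow (A.le_add_right _ _))
  refine A.le_of_mul_le_mul_left (g := s) ?_
  rw [mul_comm s a]
  exact A.le_trans (A.mul_geomSum_le a m) hsum

theorem mem_of_le_of_le {K : Set S} (hK : A.IsKernel K) {l x k : S} (hl : l ∈ K) (hk : k ∈ K)
    (hlx : A.le l x) (hxk : A.le x k) : x ∈ K := by
  have hcoef : A.add (x * k⁻¹) 1 = 1 := by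
    have h := A.mul_le_mul_left hxk k⁻¹
    rwa [inv_mul_cancel, mul_comm] at h
  have hmem := hK.2.2.2 k hk l hl (x * k⁻¹) 1 hcoef
  rwa [inv_mul_cancel_right, one_mul, A.add_comm, hlx] at hmem

theorem one_add_mem {K : Set S} (hK : A.IsKernel K) {k : S} (hk : k ∈ K) : A.add 1 k ∈ K := by
  simpa using hK.2.2.2 1 hK.1 k hk 1 1 (A.add_idem 1)

end IdemSemifieldStr

/-- If aⁿ ∈ K for some n ≥ 1, then a ∈ K, for any kernel K of an
idempotent semifield. -/
theorem pow_mem_kernel {S : Type*} [CommGroup S] (A : IdemSemifieldStr S)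
    (K : Set S) (hK : A.IsKernel K) (a : S) (n : ℕ) (hn : 1 ≤ n)
    (h : a ^ n ∈ K) : a ∈ K := by
  have hinv : ∀ x ∈ K, x⁻¹ ∈ K := hK.2.2.1
  have hupper : A.add 1 (a ^ n) ∈ K := A.one_add_mem hK h
  have hlower : (A.add 1 (a⁻¹ ^ n))⁻¹ ∈ K :=
    hinv _ (A.one_add_mem hK (inv_pow a n ▸ hinv _ h))
  have hle_lower : A.le (A.add 1 (a⁻¹ ^ n))⁻¹ a := by
    simpa using A.inv_le_inv (A.le_one_add_pow a⁻¹ hn)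
  exact A.mem_of_le_of_le hK hlower hupper hle_lower (A.le_one_add_pow a hn)
end

section
/- In an idempotent semifield S, the principal kernel generated by a equals { x ∈ S : |a|⁻ⁿ ≤ x ≤ |a|ⁿ for some n ∈ ℕ }, where |a| = a + a⁻¹. In particular, ⟨a⟩ = ⟨aᵏ⟩ for every nonzero integer k, and ⟨a⟩ = ⟨|a|⟩. -/
/-! The order `a ≤ b ↔ a + b = b` makes `S` a lattice-ordered abelian group, with meet
`(a⁻¹ + b⁻¹)⁻¹`, in which `A.abs` is `mabs`. The set of `x` with `|a|⁻ⁿ ≤ x ≤ |a|ⁿ` for some `n`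
is a kernel containing `a`; conversely a kernel containing `a` contains `|a| = 1 * a + 1 * a⁻¹`,
its powers, and by convexity everything in between.

The other two claims reduce to comparing norms. The triangle inequality gives `|aᵏ| ≤ |a|^|k|`.
For `|a| ≤ |aᵏ|` we use that `1 ≤ xⁿ` with `n ≠ 0` forces `1 ≤ x` in a lattice-ordered group
(the negative part `c = x⁻¹ ⊔ 1` satisfies `cⁿ = cⁿ⁻¹ ⊔ x⁻ⁿ = cⁿ⁻¹`, so `c = 1`), applied to
`x = |aⁿ| / a`: indeed `xⁿ = |aⁿ|ⁿ / aⁿ ≥ |aⁿ| / aⁿ ≥ 1`. -/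

section LatticeOrderedGroup

variable {α : Type*} [Lattice α]

section Group

variable [Group α]

theorem mabs_zpow_natAbs (a : α) (k : ℤ) : |a ^ k|ₘ = |a ^ k.natAbs|ₘ := by
  obtain ⟨n, rfl | rfl⟩ := Int.eq_nat_or_neg k <;> simp

variable [MulLeftMono α] [MulRightMono α]

theorem leOnePart_pow_succ (a : α) (n : ℕ) : a⁻ᵐ ^ (n + 1) = a⁻ᵐ ^ n ⊔ a⁻¹ ^ (n + 1) := by
  induction n with
  | zero => simp [leOnePart_def, sup_comm]
  | succ n ih =>
    have h : a⁻¹ ^ (n + 1) ≤ a⁻ᵐ ^ (n + 1) := ih ▸ le_sup_right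
    have e : a⁻ᵐ * a⁻¹ ^ (n + 1) = a⁻¹ ^ (n + 2) ⊔ a⁻¹ ^ (n + 1) := by
      rw [leOnePart_def, sup_mul, one_mul, ← pow_succ']
    calc a⁻ᵐ ^ (n + 1 + 1) = a⁻ᵐ * (a⁻ᵐ ^ n ⊔ a⁻¹ ^ (n + 1)) := by rw [pow_succ', ih]
      _ = a⁻ᵐ ^ (n + 1) ⊔ (a⁻¹ ^ (n + 2) ⊔ a⁻¹ ^ (n + 1)) := by rw [mul_sup, ← pow_succ', e]
      _ = a⁻ᵐ ^ (n + 1) ⊔ a⁻¹ ^ (n + 2) := by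
        rw [sup_comm (a⁻¹ ^ (n + 2)), ← sup_assoc, sup_eq_left.2 h]

theorem one_le_of_one_le_pow {a : α} {n : ℕ} (hn : n ≠ 0) (h : 1 ≤ a ^ n) : 1 ≤ a := by
  obtain ⟨m, rfl⟩ := Nat.exists_eq_succ_of_ne_zero hn
  have hpow : a⁻¹ ^ (m + 1) ≤ a⁻ᵐ ^ m :=
    (inv_pow a (m + 1) ▸ inv_le_one'.2 h).trans (one_le_pow_of_one_le' (one_le_leOnePart a) m)
  have : a⁻ᵐ ^ m * a⁻ᵐ = a⁻ᵐ ^ m := by rw [← pow_succ, leOnePart_pow_succ, sup_eq_left.2 hpow]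
  rwa [mul_eq_left, leOnePart_eq_one] at this

end Group

variable [CommGroup α] [MulLeftMono α]

theorem mabs_pow_le (a : α) (n : ℕ) : |a ^ n|ₘ ≤ |a|ₘ ^ n := by
  induction n with
  | zero => simp
  | succ n ih =>
    rw [pow_succ, pow_succ]
    exact (mabs_mul_le _ _).trans (mul_le_mul_left ih _)

theorem le_mabs_pow (a : α) {n : ℕ} (hn : n ≠ 0) : a ≤ |a ^ n|ₘ := by
  have h : 1 ≤ (|a ^ n|ₘ / a) ^ n := by
    rw [div_pow, one_le_div']
    exact (le_mabs_self _).trans (le_self_pow (one_le_mabs _) hn)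
  exact one_le_div'.1 (one_le_of_one_le_pow hn h)

theorem mabs_le_mabs_pow (a : α) {n : ℕ} (hn : n ≠ 0) : |a|ₘ ≤ |a ^ n|ₘ :=
  sup_le (le_mabs_pow a hn) (by simpa only [inv_pow, mabs_inv] using le_mabs_pow a⁻¹ hn)

theorem mabs_zpow_le (a : α) (k : ℤ) : |a ^ k|ₘ ≤ |a|ₘ ^ k.natAbs :=
  mabs_zpow_natAbs a k ▸ mabs_pow_le a _

theorem mabs_le_mabs_zpow (a : α) {k : ℤ} (hk : k ≠ 0) : |a|ₘ ≤ |a ^ k|ₘ :=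
  mabs_zpow_natAbs a k ▸ mabs_le_mabs_pow a (Int.natAbs_ne_zero.2 hk)

end LatticeOrderedGroup

namespace IdemSemifieldStr

variable {S : Type*} [CommGroup S] (A : IdemSemifieldStr S)

abbrev toSemilatticeSup : SemilatticeSup S :=
  letI : Max S := ⟨A.add⟩
  SemilatticeSup.mk' A.add_comm A.add_assoc A.add_idem

theorem isOrderedMonoid_toSemilatticeSup : letI := A.toSemilatticeSup; IsOrderedMonoid S :=
  letI := A.toSemilatticeSup
  { mul_le_mul_left := fun a b (h : A.add a b = b) c =>
      show A.add (a * c) (b * c) = b * c by rw [mul_comm a, mul_comm b, ← A.mul_dist, h] }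

abbrev toLattice : Lattice S :=
  letI := A.toSemilatticeSup
  haveI := A.isOrderedMonoid_toSemilatticeSup
  { inf := fun a b => (a⁻¹ ⊔ b⁻¹)⁻¹
    inf_le_left := fun _ _ => inv_le'.2 le_sup_left
    inf_le_right := fun _ _ => inv_le'.2 le_sup_right
    le_inf := fun _ _ _ hab hac => le_inv'.2 (sup_le (inv_le_inv' hab) (inv_le_inv' hac)) }

theorem isOrderedMonoid : letI := A.toLattice; IsOrderedMonoid S :=
  A.isOrderedMonoid_toSemilatticeSup

theorem le_iff_le {a b : S} : letI := A.toLattice; A.le a b ↔ a ≤ b := Iff.rfl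

theorem add_eq_sup (a b : S) : letI := A.toLattice; A.add a b = a ⊔ b := rfl

theorem abs_eq_mabs (a : S) : letI := A.toLattice; A.abs a = |a|ₘ := rfl

variable {A}

theorem IsKernel.mem_of_le_of_le {K : Set S} (hK : A.IsKernel K) {u v x : S} (hu : u ∈ K)
    (hv : v ∈ K) (hux : A.le u x) (hxv : A.le x v) : x ∈ K := by
  let _ := A.toLattice
  have := A.isOrderedMonoid
  rw [A.le_iff_le] at hux hxv
  have hcoef : A.add (x * v⁻¹) 1 = 1 := sup_eq_right.2 (mul_inv_le_one_iff_le.2 hxv)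
  have hx : A.add (x * v⁻¹ * v) (1 * u) = x := by
    rw [inv_mul_cancel_right, one_mul]
    exact sup_eq_left.2 hux
  exact hx ▸ hK.2.2.2 v hv u hu _ _ hcoef

theorem IsKernel.abs_mem {K : Set S} (hK : A.IsKernel K) {a : S} (ha : a ∈ K) : A.abs a ∈ K := by
  have h := hK.2.2.2 a ha a⁻¹ (hK.2.2.1 a ha) 1 1 (A.add_idem 1)
  rwa [one_mul, one_mul] at h

theorem IsKernel.pow_mem {K : Set S} (hK : A.IsKernel K) {a : S} (ha : a ∈ K) (n : ℕ) :
    a ^ n ∈ K := by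
  induction n with
  | zero => simpa using hK.1
  | succ n ih => simpa only [pow_succ] using hK.2.1 _ ih _ ha

theorem isKernel_setOf_pow {c : S} (hc : A.le 1 c) :
    A.IsKernel {x : S | ∃ n : ℕ, A.le ((c ^ n)⁻¹) x ∧ A.le x (c ^ n)} := by
  let _ := A.toLattice
  have := A.isOrderedMonoid
  simp only [IsKernel, A.le_iff_le, A.add_eq_sup] at hc ⊢
  have mono {m n : ℕ} (h : m ≤ n) : c ^ m ≤ c ^ n := pow_le_pow_right' hc h
  refine ⟨⟨0, by simp, by simp⟩, ?_, ?_, ?_⟩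
  · rintro x ⟨m, hxl, hxu⟩ y ⟨n, hyl, hyu⟩
    refine ⟨m + n, ?_, ?_⟩
    · rw [pow_add, mul_inv]
      exact mul_le_mul' hxl hyl
    · rw [pow_add]
      exact mul_le_mul' hxu hyu
  · rintro x ⟨m, hxl, hxu⟩
    exact ⟨m, inv_le_inv' hxu, inv_le'.1 hxl⟩
  · rintro x ⟨m, hxl, hxu⟩ y ⟨n, hyl, hyu⟩ α β hαβ
    have hα : α ≤ 1 := hαβ ▸ le_sup_left
    have hβ : β ≤ 1 := hαβ ▸ le_sup_right
    have hxl' := (inv_le_inv' (mono (Nat.le_add_right m n))).trans hxl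
    have hyl' := (inv_le_inv' (mono (Nat.le_add_left n m))).trans hyl
    refine ⟨m + n, ?_, sup_le ?_ ?_⟩
    · calc (c ^ (m + n))⁻¹ = α * (c ^ (m + n))⁻¹ ⊔ β * (c ^ (m + n))⁻¹ := by
            rw [← sup_mul, hαβ, one_mul]
        _ ≤ α * x ⊔ β * y := sup_le_sup (mul_le_mul' le_rfl hxl') (mul_le_mul' le_rfl hyl')
    · exact mul_le_of_le_one_of_le hα (hxu.trans (mono (Nat.le_add_right m n)))
    · exact mul_le_of_le_one_of_le hβ (hyu.trans (mono (Nat.le_add_left n m)))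

theorem kgen_subset {T K : Set S} (hK : A.IsKernel K) (hTK : T ⊆ K) : A.kgen T ⊆ K :=
  Set.sInter_subset_of_mem ⟨hK, hTK⟩

variable (A)

theorem kgen_singleton (a : S) :
    A.kgen {a} = {x : S | ∃ n : ℕ, A.le ((A.abs a ^ n)⁻¹) x ∧ A.le x (A.abs a ^ n)} := by
  let _ := A.toLattice
  have := A.isOrderedMonoid
  simp only [A.le_iff_le, A.abs_eq_mabs]
  have ha : a ∈ {x : S | ∃ n : ℕ, (|a|ₘ ^ n)⁻¹ ≤ x ∧ x ≤ |a|ₘ ^ n} :=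
    ⟨1, by simpa using inv_le'.1 (inv_le_mabs a), by simpa using le_mabs_self a⟩
  refine (kgen_subset (isKernel_setOf_pow (one_le_mabs a))
    (Set.singleton_subset_iff.2 ha)).antisymm ?_
  rintro x ⟨n, hxl, hxu⟩ K ⟨hK, haK⟩
  have hpow := hK.pow_mem (hK.abs_mem (haK rfl)) n
  exact hK.mem_of_le_of_le (hK.2.2.1 _ hpow) hpow hxl hxu

theorem kgen_singleton_subset_of_abs_le_pow {a b : S} {m : ℕ}
    (h : A.le (A.abs a) (A.abs b ^ m)) : A.kgen {a} ⊆ A.kgen {b} := by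
  let _ := A.toLattice
  have := A.isOrderedMonoid
  simp only [A.kgen_singleton, A.le_iff_le, A.abs_eq_mabs] at h ⊢
  rintro x ⟨n, hxl, hxu⟩
  have hn : |a|ₘ ^ n ≤ |b|ₘ ^ (m * n) := pow_mul |b|ₘ m n ▸ pow_le_pow_left' h n
  exact ⟨m * n, (inv_le_inv' hn).trans hxl, hxu.trans hn⟩

end IdemSemifieldStr

/-- The principal kernel ⟨a⟩ is `{ x : |a|⁻ⁿ ≤ x ≤ |a|ⁿ for some n }`;
moreover ⟨a⟩ = ⟨aᵏ⟩ for every nonzero integer k, and ⟨a⟩ = ⟨|a|⟩. -/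
theorem principal_kernel_description {S : Type*} [CommGroup S]
    (A : IdemSemifieldStr S) (a : S) :
    A.kgen {a} =
      {x : S | ∃ n : ℕ, A.le ((A.abs a ^ n)⁻¹) x ∧ A.le x (A.abs a ^ n)} ∧
    (∀ k : ℤ, k ≠ 0 → A.kgen {a} = A.kgen {a ^ k}) ∧
    A.kgen {a} = A.kgen {A.abs a} := by
  let _ := A.toLattice
  have := A.isOrderedMonoid
  refine ⟨A.kgen_singleton a, fun k hk => ?_, ?_⟩
  · refine (A.kgen_singleton_subset_of_abs_le_pow (m := 1) ?_).antisymm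
      (A.kgen_singleton_subset_of_abs_le_pow (mabs_zpow_le a k))
    rw [pow_one]
    exact mabs_le_mabs_zpow a hk
  · rw [A.kgen_singleton, A.kgen_singleton, show A.abs (A.abs a) = A.abs a from mabs_mabs a]
end
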